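/- For the Poisson distribution of order 2, P_x satisfies x·P_x = λP_{x−1} + 2λP_{x−2} for x ≥ 1 (with P_{−1} = 0), and consequently Δ_5 = P_5 − P_4 = (4/15)e^{−4} when λ = 2. -/

import Mathlib

open scoped BigOperators
open Real

/-- The pmf of the Poisson distribution of order `k` with parameter `lam`,
indexed by `x : ℤ` (it vanishes for `x < 0`):
`f_k(x;λ) = Σ e^{-kλ} λ^{x₁+⋯+x_k}/(x₁!⋯x_k!)` summed over all `k`-tuples of
nonnegative integers with `x₁ + 2x₂ + ⋯ + k x_k = x`. -/
noncomputable def poissonOrderK (k : ℕ) (lam : ℝ) (x : ℤ) : ℝ :=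
  ∑' t : Fin k → ℕ,
    if ((∑ i : Fin k, ((i : ℕ) + 1) * t i : ℕ) : ℤ) = x then
      Real.exp (-(k * lam)) * lam ^ (∑ i : Fin k, t i) /
        ∏ i : Fin k, (Nat.factorial (t i) : ℝ)
    else 0

/-- The difference `Δ_x = P_x - P_{x-1}`. -/
noncomputable def deltaOrderK (k : ℕ) (lam : ℝ) (x : ℤ) : ℝ :=
  poissonOrderK k lam x - poissonOrderK k lam (x - 1)

/-!
Reindex the defining series by pairs `(x₁, x₂) ∈ ℕ × ℕ`. On the support `x = x₁ + 2 x₂`, so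
`x P_x = Σ x₁ (term) + 2 Σ x₂ (term)`, and lowering `x₁` (resp. `x₂`) by one turns `x₁ (term)`
(resp. `x₂ (term)`) into `λ` times the summand of `P_{x-1}` (resp. `P_{x-2}`); the recurrence thus
holds for every integer `x`. From `P_{-1} = 0` and `P_0 = e^{-2λ}` it gives, at `λ = 2`,
`P_4 = (20/3) e^{-4}` and `P_5 = (104/15) e^{-4}`.
-/

theorem tsum_prod_succ_fst {α : Type*} [AddCommMonoid α] [TopologicalSpace α] {f : ℕ × ℕ → α}
    (hf : ∀ b, f (0, b) = 0) : ∑' p : ℕ × ℕ, f (p.1 + 1, p.2) = ∑' p, f p := by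
  refine Function.Injective.tsum_eq (g := fun p : ℕ × ℕ => (p.1 + 1, p.2)) ?_ ?_
  · intro p q h
    simp_all [Prod.ext_iff]
  · rintro ⟨_ | a, b⟩ h
    · exact absurd (hf b) h
    · exact ⟨(a, b), rfl⟩

theorem tsum_prod_succ_snd {α : Type*} [AddCommMonoid α] [TopologicalSpace α] {f : ℕ × ℕ → α}
    (hf : ∀ a, f (a, 0) = 0) : ∑' p : ℕ × ℕ, f (p.1, p.2 + 1) = ∑' p, f p := by
  refine Function.Injective.tsum_eq (g := fun p : ℕ × ℕ => (p.1, p.2 + 1)) ?_ ?_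
  · intro p q h
    simp_all [Prod.ext_iff]
  · rintro ⟨a, _ | b⟩ h
    · exact absurd (hf a) h
    · exact ⟨(a, b), rfl⟩

namespace PoissonOrderTwo

noncomputable def term (lam : ℝ) (x : ℤ) (p : ℕ × ℕ) : ℝ :=
  if (p.1 + 2 * p.2 : ℤ) = x then
    Real.exp (-(2 * lam)) * lam ^ (p.1 + p.2) / ((p.1.factorial : ℝ) * p.2.factorial)
  else 0

theorem poissonOrderK_two_eq_tsum_term (lam : ℝ) (x : ℤ) :
    poissonOrderK 2 lam x = ∑' p : ℕ × ℕ, term lam x p := by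
  rw [poissonOrderK, ← (piFinTwoEquiv fun _ => ℕ).symm.tsum_eq]
  simp [term, Fin.sum_univ_two, Fin.prod_univ_two]

theorem term_eq_zero_of_ne {lam : ℝ} {x : ℤ} {p : ℕ × ℕ} (h : (p.1 + 2 * p.2 : ℤ) ≠ x) :
    term lam x p = 0 :=
  if_neg h

theorem summable_mul_term (g : ℕ × ℕ → ℝ) (lam : ℝ) (x : ℤ) :
    Summable fun p => g p * term lam x p := by
  refine summable_of_ne_finset_zero (s := Finset.Iic (x.toNat, x.toNat)) fun p hp => ?_
  rw [term_eq_zero_of_ne, mul_zero]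
  rw [Finset.mem_Iic, Prod.le_def] at hp
  omega

theorem intCast_mul_term (lam : ℝ) (x : ℤ) (p : ℕ × ℕ) :
    (x : ℝ) * term lam x p = p.1 * term lam x p + 2 * p.2 * term lam x p := by
  by_cases h : (p.1 + 2 * p.2 : ℤ) = x
  · rw [← h]; push_cast; ring
  · simp [term_eq_zero_of_ne h]

theorem succ_mul_term_succ_fst (lam : ℝ) (x : ℤ) (a b : ℕ) :
    ((a + 1 : ℕ) : ℝ) * term lam x (a + 1, b) = lam * term lam (x - 1) (a, b) := by
  by_cases h : (a + 2 * b : ℤ) = x - 1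
  · rw [term, term, if_pos (by push_cast; omega), if_pos h, Nat.factorial_succ]
    push_cast
    field_simp
    ring
  · rw [term_eq_zero_of_ne (by push_cast; omega), term_eq_zero_of_ne h, mul_zero, mul_zero]

theorem succ_mul_term_succ_snd (lam : ℝ) (x : ℤ) (a b : ℕ) :
    ((b + 1 : ℕ) : ℝ) * term lam x (a, b + 1) = lam * term lam (x - 2) (a, b) := by
  by_cases h : (a + 2 * b : ℤ) = x - 2
  · rw [term, term, if_pos (by push_cast; omega), if_pos h, Nat.factorial_succ]
    push_cast
    field_simp
    ring
  · rw [term_eq_zero_of_ne (by push_cast; omega), term_eq_zero_of_ne h, mul_zero, mul_zero]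

theorem poissonOrderK_two_recurrence (lam : ℝ) (x : ℤ) :
    (x : ℝ) * poissonOrderK 2 lam x
      = lam * poissonOrderK 2 lam (x - 1) + 2 * lam * poissonOrderK 2 lam (x - 2) := by
  simp only [poissonOrderK_two_eq_tsum_term, ← tsum_mul_left]
  have hfst : ∑' p : ℕ × ℕ, (p.1 : ℝ) * term lam x p = ∑' p, lam * term lam (x - 1) p := by
    rw [← tsum_prod_succ_fst (by simp)]
    exact tsum_congr fun p => succ_mul_term_succ_fst lam x p.1 p.2
  have hsnd : ∑' p : ℕ × ℕ, (p.2 : ℝ) * term lam x p = ∑' p, lam * term lam (x - 2) p := by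
    rw [← tsum_prod_succ_snd (by simp)]
    exact tsum_congr fun p => succ_mul_term_succ_snd lam x p.1 p.2
  rw [tsum_congr (intCast_mul_term lam x),
    (summable_mul_term _ lam x).tsum_add (summable_mul_term _ lam x), hfst]
  simp only [mul_assoc, tsum_mul_left, hsnd]

theorem poissonOrderK_two_zero (lam : ℝ) : poissonOrderK 2 lam 0 = Real.exp (-(2 * lam)) := by
  rw [poissonOrderK_two_eq_tsum_term, tsum_eq_single (0, 0)]
  · simp [term]
  · rintro ⟨a, b⟩ h
    refine term_eq_zero_of_ne ?_
    simp only [ne_eq, Prod.mk.injEq, not_and_or] at h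
    omega

theorem poissonOrderK_two_of_neg (lam : ℝ) {x : ℤ} (hx : x < 0) : poissonOrderK 2 lam x = 0 := by
  rw [poissonOrderK_two_eq_tsum_term,
    tsum_congr fun p => term_eq_zero_of_ne (by omega), tsum_zero]

end PoissonOrderTwo

open PoissonOrderTwo

theorem poissonOrder2_recurrence_and_delta5 :
    (∀ lam : ℝ, 0 < lam → ∀ x : ℤ, 1 ≤ x →
      (x : ℝ) * poissonOrderK 2 lam x
        = lam * poissonOrderK 2 lam (x - 1) + 2 * lam * poissonOrderK 2 lam (x - 2))
    ∧ poissonOrderK 2 2 5 - poissonOrderK 2 2 4 = 4 / 15 * Real.exp (-4) := by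
  refine ⟨fun lam _ x _ => poissonOrderK_two_recurrence lam x, ?_⟩
  have h₀ := poissonOrderK_two_zero 2
  have hneg := poissonOrderK_two_of_neg 2 (x := -1) (by norm_num)
  have h₁ := poissonOrderK_two_recurrence 2 1
  have h₂ := poissonOrderK_two_recurrence 2 2
  have h₃ := poissonOrderK_two_recurrence 2 3
  have h₄ := poissonOrderK_two_recurrence 2 4
  have h₅ := poissonOrderK_two_recurrence 2 5
  norm_num at h₀ h₁ h₂ h₃ h₄ h₅
  linarith
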